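/- arXiv:1403.0233 — 4 statements merged into one kernel-verified Lean document; each statement's English description precedes it below -/
import Mathlib

section
/- For all n ≥ 1 and i, j ≥ 0, the coefficients a_{n,i,j} satisfy a_{2n,i,j} = (2i+1)a_{2n-1,i,j-1} + (2j+1)a_{2n-1,i-1,j} + (4n-2i-2j+1)a_{2n-1,i-1,j-1}. -/
open MvPolynomial Finset

/-- The Dumont derivation on `ℚ[x,y,z]`: `D x = y*z`, `D y = x*z`, `D z = x*y`. -/
noncomputable def Dum : Derivation ℚ (MvPolynomial (Fin 3) ℚ) (MvPolynomial (Fin 3) ℚ) :=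
  MvPolynomial.mkDerivation ℚ ![X 1 * X 2, X 0 * X 2, X 0 * X 1]

/-- The operator `p ↦ x * D p`. -/
noncomputable def xD : MvPolynomial (Fin 3) ℚ → MvPolynomial (Fin 3) ℚ :=
  fun p => X 0 * Dum p

/-- `aC n i j` is the coefficient `a_{n,i,j}` of `(xD)^n(x)`:
for even `n`, the coefficient of `x^(2i+1) y^(2j) z^(2n-2i-2j)`;
for odd `n`, the coefficient of `x^(2i+1) y^(2j+1) z^(2n-1-2i-2j)`.
Coefficients with negative indices are `0`. -/
noncomputable def aC (n : ℕ) (i j : ℤ) : ℚ :=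
  if 0 ≤ i ∧ 0 ≤ j then
    MvPolynomial.coeff
      (Finsupp.single 0 (2*i+1).toNat
        + Finsupp.single 1 ((if Even n then 2*j else 2*j+1).toNat)
        + Finsupp.single 2 ((2*(n:ℤ) - 2*i - 2*j - if Even n then 0 else 1).toNat))
      (xD^[n] (X 0))
  else 0

/-!
Since `x D = x y z ∂_x + x² z ∂_y + x² y ∂_z`, the coefficient of `x^a y^b z^c` in `x D p` is
`a [x^a y^(b-1) z^(c-1)] p + (b+1) [x^(a-2) y^(b+1) z^(c-1)] p + (c+1) [x^(a-2) y^(b-1) z^(c+1)] p`,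
for all integers `a, b, c` once coefficients at negative exponents are read as `0`. Taking
`p = (xD)^(2n-1)(x)` and `(a, b, c) = (2i+1, 2j, 4n-2i-2j)` gives the recurrence. The only other
point is that `aC` truncates a negative `z`-exponent to `0`; such coefficients vanish because
`(xD)^k(x)` is homogeneous of degree `2k+1`.
-/

namespace MvPolynomial

variable {σ R : Type*} [CommRing R]

open scoped Classical in
/-- Coefficients at integer exponent vectors, `0` as soon as an exponent is negative. With this
convention the coefficient recursion `zcoeff_xD` holds without side conditions. -/
noncomputable def zcoeff (m : σ →₀ ℤ) (p : MvPolynomial σ R) : R :=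
  if 0 ≤ m then coeff (m.mapRange Int.toNat Int.toNat_zero) p else 0

lemma zcoeff_natCast (n : σ →₀ ℕ) (p : MvPolynomial σ R) :
    zcoeff (n.mapRange (↑) Nat.cast_zero) p = coeff n p := by
  rw [zcoeff, if_pos (Finsupp.le_def.mpr fun k => by simp)]
  congr 1
  ext k
  simp

lemma zcoeff_of_neg {m : σ →₀ ℤ} {k : σ} (hk : m k < 0) (p : MvPolynomial σ R) :
    zcoeff m p = 0 :=
  if_neg fun h => (Finsupp.le_def.mp h k).not_gt hk

lemma exists_natCast_or_neg (m : σ →₀ ℤ) :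
    (∃ n : σ →₀ ℕ, n.mapRange (↑) Nat.cast_zero = m) ∨ ∃ k, m k < 0 := by
  refine or_iff_not_imp_right.mpr fun h => ⟨m.mapRange Int.toNat Int.toNat_zero, ?_⟩
  ext k
  simpa using not_lt.mp fun hk => h ⟨k, hk⟩

lemma zcoeff_add (m : σ →₀ ℤ) (p q : MvPolynomial σ R) :
    zcoeff m (p + q) = zcoeff m p + zcoeff m q := by
  unfold zcoeff; split_ifs <;> simp

lemma zcoeff_X_mul [DecidableEq σ] (m : σ →₀ ℤ) (i : σ) (p : MvPolynomial σ R) :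
    zcoeff m (X i * p) = zcoeff (m - Finsupp.single i 1) p := by
  rcases exists_natCast_or_neg m with ⟨n, rfl⟩ | ⟨k, hk⟩
  · by_cases hi : n i = 0
    · rw [zcoeff_natCast, coeff_X_mul', if_neg (by simpa using hi),
        zcoeff_of_neg (k := i) (by simp [hi])]
    · have : n.mapRange (↑) Nat.cast_zero - Finsupp.single i 1
          = (n - Finsupp.single i 1).mapRange ((↑) : ℕ → ℤ) Nat.cast_zero := by
        ext k
        rcases eq_or_ne k i with rfl | hk <;> simp [*]; omega
      rw [zcoeff_natCast, coeff_X_mul', if_pos (by simpa using hi), this, zcoeff_natCast]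
  · rw [zcoeff_of_neg hk, zcoeff_of_neg (k := k)]
    rcases eq_or_ne k i with rfl | hki <;> simp [*]; omega

lemma zcoeff_pderiv [DecidableEq σ] (m : σ →₀ ℤ) (i : σ) (p : MvPolynomial σ R) :
    zcoeff m (pderiv i p) = zcoeff (m + Finsupp.single i 1) p * ((m i : R) + 1) := by
  rcases exists_natCast_or_neg m with ⟨n, rfl⟩ | ⟨k, hk⟩
  · have : n.mapRange (↑) Nat.cast_zero + Finsupp.single i 1
          = (n + Finsupp.single i 1).mapRange ((↑) : ℕ → ℤ) Nat.cast_zero := by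
      ext k
      rcases eq_or_ne k i with rfl | hk <;> simp [*]
    rw [zcoeff_natCast, coeff_pderiv, this, zcoeff_natCast]
    simp
  · rw [zcoeff_of_neg hk]
    by_cases h : k = i ∧ m i = -1
    · simp [h.2]
    · rw [zcoeff_of_neg (k := k), zero_mul]
      rcases eq_or_ne k i with rfl | hki <;> simp_all; omega

end MvPolynomial

noncomputable def xyz (a b c : ℤ) : Fin 3 →₀ ℤ :=
  Finsupp.single 0 a + Finsupp.single 1 b + Finsupp.single 2 c

lemma xyz_add (a b c a' b' c' : ℤ) :
    xyz a b c + xyz a' b' c' = xyz (a + a') (b + b') (c + c') := by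
  ext k; fin_cases k <;> simp [xyz]

lemma xyz_sub (a b c a' b' c' : ℤ) :
    xyz a b c - xyz a' b' c' = xyz (a - a') (b - b') (c - c') := by
  ext k; fin_cases k <;> simp [xyz]

lemma single_zero_eq_xyz (a : ℤ) : Finsupp.single 0 a = xyz a 0 0 := by simp [xyz]
lemma single_one_eq_xyz (b : ℤ) : Finsupp.single 1 b = xyz 0 b 0 := by simp [xyz]
lemma single_two_eq_xyz (c : ℤ) : Finsupp.single 2 c = xyz 0 0 c := by simp [xyz]

@[simp] lemma xyz_apply_zero (a b c : ℤ) : xyz a b c 0 = a := by simp [xyz]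
@[simp] lemma xyz_apply_one (a b c : ℤ) : xyz a b c 1 = b := by simp [xyz]
@[simp] lemma xyz_apply_two (a b c : ℤ) : xyz a b c 2 = c := by simp [xyz]

lemma Dum_apply (p : MvPolynomial (Fin 3) ℚ) :
    Dum p = X 1 * X 2 * pderiv 0 p + X 0 * X 2 * pderiv 1 p + X 0 * X 1 * pderiv 2 p := by
  have : Dum = (X 1 * X 2 : MvPolynomial (Fin 3) ℚ) • pderiv 0
      + (X 0 * X 2 : MvPolynomial (Fin 3) ℚ) • pderiv 1
      + (X 0 * X 1 : MvPolynomial (Fin 3) ℚ) • pderiv 2 := by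
    refine derivation_ext fun i => ?_
    fin_cases i <;> simp [Dum, pderiv_X]
  simp [this]

lemma zcoeff_xD (p : MvPolynomial (Fin 3) ℚ) (a b c : ℤ) :
    zcoeff (xyz a b c) (xD p) =
      a * zcoeff (xyz a (b - 1) (c - 1)) p + (b + 1) * zcoeff (xyz (a - 2) (b + 1) (c - 1)) p
        + (c + 1) * zcoeff (xyz (a - 2) (b - 1) (c + 1)) p := by
  simp only [xD, Dum_apply, mul_add, zcoeff_add, mul_assoc, zcoeff_X_mul, zcoeff_pderiv,
    single_zero_eq_xyz, single_one_eq_xyz, single_two_eq_xyz, xyz_add, xyz_sub,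
    xyz_apply_zero, xyz_apply_one, xyz_apply_two]
  push_cast
  ring_nf

lemma isHomogeneous_Dum {p : MvPolynomial (Fin 3) ℚ} {d : ℕ} (hp : p.IsHomogeneous (d + 1)) :
    (Dum p).IsHomogeneous (d + 2) := by
  have h (i j k : Fin 3) : (X i * X j * pderiv k p).IsHomogeneous (d + 2) := by
    convert ((isHomogeneous_X ℚ i).mul (isHomogeneous_X ℚ j)).mul hp.pderiv using 1
    omega
  rw [Dum_apply]
  exact ((h 1 2 0).add (h 0 2 1)).add (h 0 1 2)

lemma isHomogeneous_xD_iterate (n : ℕ) : (xD^[n] (X 0)).IsHomogeneous (2 * n + 1) := by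
  induction n with
  | zero => exact isHomogeneous_X ℚ 0
  | succ n ih =>
    rw [Function.iterate_succ_apply', xD]
    convert (isHomogeneous_X ℚ 0).mul (isHomogeneous_Dum ih) using 1
    omega

lemma zcoeff_xyz (p : MvPolynomial (Fin 3) ℚ) (a b c : ℤ) :
    zcoeff (xyz a b c) p = if 0 ≤ a ∧ 0 ≤ b ∧ 0 ≤ c then
      coeff (Finsupp.single 0 a.toNat + Finsupp.single 1 b.toNat + Finsupp.single 2 c.toNat) p
    else 0 := by
  have hle : 0 ≤ xyz a b c ↔ 0 ≤ a ∧ 0 ≤ b ∧ 0 ≤ c := by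
    simp [Finsupp.le_def, Fin.forall_fin_succ]
  have hnat : (xyz a b c).mapRange Int.toNat Int.toNat_zero
      = Finsupp.single 0 a.toNat + Finsupp.single 1 b.toNat + Finsupp.single 2 c.toNat := by
    ext k; fin_cases k <;> simp [xyz]
  simp only [zcoeff, hle, hnat]

lemma aC_eq_zcoeff (n : ℕ) (i j : ℤ) :
    aC n i j = zcoeff (xyz (2 * i + 1) (if Even n then 2 * j else 2 * j + 1)
      (2 * n - 2 * i - 2 * j - if Even n then 0 else 1)) (xD^[n] (X 0)) := by
  have hbc : (if Even n then 2 * j else 2 * j + 1)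
      + (2 * n - 2 * i - 2 * j - if Even n then 0 else 1) = 2 * n - 2 * i := by
    split_ifs <;> ring
  have hb : 2 * j ≤ (if Even n then 2 * j else 2 * j + 1) ∧
      (if Even n then 2 * j else 2 * j + 1) ≤ 2 * j + 1 := by
    split_ifs <;> omega
  rw [aC, zcoeff_xyz]
  generalize (if Even n then 2 * j else 2 * j + 1) = b at *
  generalize (2 * (n : ℤ) - 2 * i - 2 * j - if Even n then 0 else 1) = c at *
  by_cases hij : 0 ≤ i ∧ 0 ≤ j
  · by_cases hc : 0 ≤ c
    · rw [if_pos hij, if_pos (by omega)]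
    · rw [if_pos hij, if_neg (by omega), (isHomogeneous_xD_iterate n).coeff_eq_zero]
      simp only [map_add, Finsupp.degree_single]
      omega
  · rw [if_neg hij, if_neg (by omega)]

theorem stmt1_general (n : ℕ) (hn : 1 ≤ n) (i j : ℤ) :
    aC (2*n) i j =
      (2*(i:ℚ)+1) * aC (2*n-1) i (j-1) + (2*(j:ℚ)+1) * aC (2*n-1) (i-1) j
        + (4*(n:ℚ)-2*(i:ℚ)-2*(j:ℚ)+1) * aC (2*n-1) (i-1) (j-1) := by
  obtain ⟨k, rfl⟩ : ∃ k, n = k + 1 := ⟨n - 1, by omega⟩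
  have hodd : 2 * (k + 1) - 1 = 2 * k + 1 := by omega
  have heven : 2 * (k + 1) = 2 * k + 1 + 1 := by ring
  simp only [hodd, aC_eq_zcoeff]
  rw [heven, Function.iterate_succ_apply', zcoeff_xD]
  simp only [Nat.even_add_one, even_two_mul, not_true_eq_false, not_false_eq_true,
    if_true, if_false]
  push_cast
  ring_nf

theorem stmt1 (n : ℕ) (hn : 1 ≤ n) (i j : ℤ) (hi : 0 ≤ i) (hj : 0 ≤ j) :
    aC (2*n) i j =
      (2*(i:ℚ)+1) * aC (2*n-1) i (j-1) + (2*(j:ℚ)+1) * aC (2*n-1) (i-1) j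
        + (4*(n:ℚ)-2*(i:ℚ)-2*(j:ℚ)+1) * aC (2*n-1) (i-1) (j-1) :=
  stmt1_general n hn i j
end

section
/- For all n ≥ 1, the sum of all coefficients a_{n,i,j} over i, j ≥ 0 equals the double factorial (2n-1)!!. -/
/-
`D` is a derivation with `D(x_i)` homogeneous of degree 2, so `(xD)^n(x)` is homogeneous of
degree `2n+1`. At `x = y = z = 1` every `D(x_i)` equals 1, so by Euler's identity evaluating
`D p` there multiplies the value of `p` by its degree: the sum of all coefficients of
`(xD)^n(x)` is `1 · 3 ⋯ (2n-1)`. These coefficients are exactly the `a_{n,i,j}`: `D` shifts the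
parities of the exponents of `x` and `y` in a fixed way, so every monomial of `(xD)^n(x)` has odd
`x`-exponent and `y`-exponent of the parity of `n`.
-/
open MvPolynomial Finset

namespace MvPolynomial

variable {R σ : Type*} [CommSemiring R]

theorem sum_coeff_eq_eval_one [DecidableEq σ] {ι : Type*} {p : MvPolynomial σ R} {s : Finset ι}
    {e : ι → σ →₀ ℕ} (he : Set.InjOn e s) (hp : p.support ⊆ s.image e) :
    ∑ q ∈ s, coeff (e q) p = eval 1 p := by
  calc ∑ q ∈ s, coeff (e q) p = ∑ m ∈ s.image e, coeff m p := (sum_image he).symm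
    _ = ∑ m ∈ p.support, coeff m p :=
      (sum_subset hp fun m _ hm => notMem_support_iff.mp hm).symm
    _ = eval 1 p := by simp [eval_eq]

variable [Fintype σ]

theorem derivation_eq_sum_pderiv (D : Derivation R (MvPolynomial σ R) (MvPolynomial σ R))
    (p : MvPolynomial σ R) : D p = ∑ i, D (X i) * pderiv i p := by
  classical
  have hsum : ∀ q, (∑ i, D (X i) • pderiv i) q = ∑ i, D (X i) * pderiv i q := fun q => by
    rw [← Derivation.coeFnAddMonoidHom_apply, map_sum, Finset.sum_apply]
    rfl
  suffices D = ∑ i, D (X i) • pderiv i by rw [← hsum, ← this]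
  refine derivation_ext fun j => ?_
  simp [hsum, pderiv_X, Pi.single_apply]

theorem IsHomogeneous.eval_derivation {p : MvPolynomial σ R} {d : ℕ} (hp : p.IsHomogeneous d)
    (D : Derivation R (MvPolynomial σ R) (MvPolynomial σ R)) (a : σ → R)
    (hD : ∀ i, eval a (D (X i)) = a i) : eval a (D p) = d * eval a p := by
  have euler := congrArg (eval a) hp.sum_X_mul_pderiv
  simp only [map_sum, map_mul, eval_X, nsmul_eq_mul, map_natCast] at euler
  simp only [derivation_eq_sum_pderiv D p, map_sum, map_mul, hD, euler]

theorem IsHomogeneous.derivation {D : Derivation R (MvPolynomial σ R) (MvPolynomial σ R)}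
    {k : ℕ} (hD : ∀ i, (D (X i)).IsHomogeneous (k + 1)) {p : MvPolynomial σ R} {d : ℕ}
    (hp : p.IsHomogeneous (d + 1)) : (D p).IsHomogeneous (d + 1 + k) := by
  rw [derivation_eq_sum_pderiv]
  refine IsHomogeneous.sum _ _ _ fun i _ => ?_
  convert (hD i).mul hp.pderiv using 1
  omega

theorem IsWeightedHomogeneous.derivation {M : Type*} [AddCommGroup M] {w : σ → M} {k : M}
    {D : Derivation R (MvPolynomial σ R) (MvPolynomial σ R)}
    (hD : ∀ i, (D (X i)).IsWeightedHomogeneous w (w i + k)) {p : MvPolynomial σ R} {d : M}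
    (hp : p.IsWeightedHomogeneous w d) : (D p).IsWeightedHomogeneous w (d + k) := by
  rw [derivation_eq_sum_pderiv]
  refine IsWeightedHomogeneous.sum _ _ _ fun i _ => ?_
  convert (hD i).mul (hp.pderiv (sub_add_cancel d (w i))) using 1
  abel

end MvPolynomial

lemma Dum_X (i : Fin 3) : Dum (X i) = ![X 1 * X 2, X 0 * X 2, X 0 * X 1] i :=
  mkDerivation_X _ _ _

lemma eval_one_Dum_X (i : Fin 3) : eval 1 (Dum (X i)) = (1 : Fin 3 → ℚ) i := by
  fin_cases i <;> simp [Dum_X]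

lemma isWeightedHomogeneous_Dum_X {M : Type*} [AddCommMonoid M] {w : Fin 3 → M} {k : M}
    (h₀ : w 1 + w 2 = w 0 + k) (h₁ : w 0 + w 2 = w 1 + k) (h₂ : w 0 + w 1 = w 2 + k)
    (i : Fin 3) : (Dum (X i)).IsWeightedHomogeneous w (w i + k) := by
  have hX := isWeightedHomogeneous_X ℚ w
  fin_cases i
  · simpa [Dum_X, h₀] using (hX 1).mul (hX 2)
  · simpa [Dum_X, h₁] using (hX 0).mul (hX 2)
  · simpa [Dum_X, h₂] using (hX 0).mul (hX 1)

lemma xD_iterate_succ (n : ℕ) : xD^[n + 1] (X 0) = X 0 * Dum (xD^[n] (X 0)) :=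
  Function.iterate_succ_apply' ..

/-- The parities of the exponents of `x` and `y`: `Dum` raises this weight by `(1, 1)`,
so `xD` raises it by `(0, 1)`. -/
def parityWeight : Fin 3 → ZMod 2 × ZMod 2 := ![(1, 0), (0, 1), (0, 0)]

lemma isWeightedHomogeneous_xD_iterate (n : ℕ) :
    (xD^[n] (X 0)).IsWeightedHomogeneous parityWeight (1, (n : ZMod 2)) := by
  induction n with
  | zero => rw [Nat.cast_zero]; exact isWeightedHomogeneous_X ℚ parityWeight 0
  | succ n ih =>
    rw [xD_iterate_succ]
    have hD := ih.derivation (k := (1, 1))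
      (isWeightedHomogeneous_Dum_X (by decide) (by decide) (by decide))
    have hw : ((1, ((n + 1 : ℕ) : ZMod 2)) : ZMod 2 × ZMod 2)
        = parityWeight 0 + ((1, (n : ZMod 2)) + (1, 1)) :=
      Prod.ext (show (1 : ZMod 2) = 1 + (1 + 1) by decide) (by simp [parityWeight])
    exact hw ▸ (isWeightedHomogeneous_X ℚ _ 0).mul hD

lemma eval_one_xD_iterate (n : ℕ) :
    eval 1 (xD^[n] (X 0)) = ((2 * n - 1).doubleFactorial : ℚ) := by
  induction n with
  | zero => simp
  | succ n ih =>
    rw [xD_iterate_succ, map_mul, eval_X, Pi.one_apply,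
      (isHomogeneous_xD_iterate n).eval_derivation Dum 1 eval_one_Dum_X, ih,
      show 2 * (n + 1) - 1 = 2 * n + 1 by omega, Nat.doubleFactorial_add_one]
    push_cast
    ring

noncomputable def aExponent (n i j : ℕ) : Fin 3 →₀ ℕ :=
  Finsupp.single 0 (2 * i + 1) + Finsupp.single 1 (2 * j + n % 2)
    + Finsupp.single 2 (2 * n - 2 * i - 2 * j - n % 2)

lemma aExponent_apply_zero (n i j : ℕ) : aExponent n i j 0 = 2 * i + 1 := by
  simp [aExponent]

lemma aExponent_apply_one (n i j : ℕ) : aExponent n i j 1 = 2 * j + n % 2 := by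
  simp [aExponent]

lemma aExponent_apply_two (n i j : ℕ) :
    aExponent n i j 2 = 2 * n - 2 * i - 2 * j - n % 2 := by
  simp [aExponent]

lemma aExponent_uncurry_injective (n : ℕ) :
    Function.Injective (Function.uncurry (aExponent n)) := by
  rintro ⟨i, j⟩ ⟨i', j'⟩ h
  have h₀ := DFunLike.congr_fun h 0
  have h₁ := DFunLike.congr_fun h 1
  simp only [Function.uncurry_apply_pair, aExponent_apply_zero, aExponent_apply_one] at h₀ h₁
  ext <;> omega

lemma aC_natCast (n i j : ℕ) : aC n i j = coeff (aExponent n i j) (xD^[n] (X 0)) := by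
  rw [aC, if_pos ⟨by positivity, by positivity⟩, aExponent]
  have h₁ : (if Even n then 2 * (j : ℤ) else 2 * j + 1).toNat = 2 * j + n % 2 := by
    split_ifs with h <;> rw [Nat.even_iff] at h <;> omega
  have h₂ : (2 * (n : ℤ) - 2 * i - 2 * j - if Even n then 0 else 1).toNat
      = 2 * n - 2 * i - 2 * j - n % 2 := by
    split_ifs with h <;> rw [Nat.even_iff] at h <;> omega
  rw [h₁, h₂]
  congr

lemma support_xD_iterate_subset (n : ℕ) : (xD^[n] (X 0)).support
    ⊆ (range (n + 1) ×ˢ range (n + 1)).image (Function.uncurry (aExponent n)) := by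
  intro m hm
  have hc := mem_support_iff.mp hm
  have hdeg : m 0 + m 1 + m 2 = 2 * n + 1 := by
    simpa [Finsupp.weight_apply, Finsupp.sum_fintype, Fin.sum_univ_three]
      using isHomogeneous_xD_iterate n hc
  have hpar : ((m 0 : ZMod 2), (m 1 : ZMod 2)) = (1, (n : ZMod 2)) := by
    simpa [parityWeight, Finsupp.weight_apply, Finsupp.sum_fintype, Fin.sum_univ_three,
      Prod.ext_iff] using isWeightedHomogeneous_xD_iterate n hc
  rw [Prod.mk.injEq, ← Nat.cast_one, ZMod.natCast_eq_natCast_iff',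
    ZMod.natCast_eq_natCast_iff'] at hpar
  refine mem_image.mpr ⟨(m 0 / 2, m 1 / 2), by simp only [mem_product, mem_range]; omega, ?_⟩
  ext k
  fin_cases k <;>
    simp only [Function.uncurry_apply_pair, Fin.zero_eta, Fin.mk_one, Fin.reduceFinMk,
      aExponent_apply_zero, aExponent_apply_one, aExponent_apply_two] <;>
    omega

theorem stmt2_general (n : ℕ) :
    ∑ i ∈ Finset.range (n+1), ∑ j ∈ Finset.range (n+1), aC n (i:ℤ) (j:ℤ)
      = ((2*n-1).doubleFactorial : ℚ) := by
  simp only [aC_natCast]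
  rw [← sum_product', ← eval_one_xD_iterate n]
  exact sum_coeff_eq_eval_one (aExponent_uncurry_injective n).injOn (support_xD_iterate_subset n)

theorem stmt2 (n : ℕ) (hn : 1 ≤ n) :
    ∑ i ∈ Finset.range (n+1), ∑ j ∈ Finset.range (n+1), aC n (i:ℤ) (j:ℤ)
      = ((2*n-1).doubleFactorial : ℚ) :=
  stmt2_general n
end

section
/- For all n ≥ 1 and i, j ≥ 0, the coefficients c_{n,i,j} satisfy c_{2n,i,j} = (2i+2)c_{2n-1,i,j-1} + (2j+1)c_{2n-1,i-1,j} + (4n-2i-2j+1)c_{2n-1,i-1,j-1} and c_{2n+1,i,j} = (2i+2)c_{2n,i,j} + (2j+2)c_{2n,i-1,j+1} + (4n-2i-2j+2)c_{2n,i-1,j}. -/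
/-!
Since `D = yz ∂ₓ + xz ∂_y + xy ∂_z`, we have `Dx p = yz p + x D p`, and comparing coefficients
of `xᵃ yᵇ zᶜ` gives
`[a, b, c] Dx p = (a+1) [a, b-1, c-1] p + (b+1) [a-2, b+1, c-1] p + (c+1) [a-2, b-1, c+1] p`.
With integer exponents and coefficients at negative exponents set to `0`, this holds with no
side conditions: a term whose exponent would be `-1` carries the factor `0`. As `Dx` raises the
degree by `2`, `(Dx)ⁿ(x)` is homogeneous of degree `2n+1`, so the exponent of `z` in `c_{n,i,j}`
is forced, and both recurrences are instances of the one above.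
-/

open MvPolynomial Finset

/-- The operator `p ↦ D (x * p)`. -/
noncomputable def Dx : MvPolynomial (Fin 3) ℚ → MvPolynomial (Fin 3) ℚ :=
  fun p => Dum (X 0 * p)

/-- `cC n i j` is the coefficient `c_{n,i,j}` of `(Dx)^n(x)`:
for even `n`, the coefficient of `x^(2i+1) y^(2j) z^(2n-2i-2j)`;
for odd `n`, the coefficient of `x^(2i+1) y^(2j+1) z^(2n-1-2i-2j)`.
Coefficients with negative indices are `0`. -/
noncomputable def cC (n : ℕ) (i j : ℤ) : ℚ :=
  if 0 ≤ i ∧ 0 ≤ j then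
    MvPolynomial.coeff
      (Finsupp.single 0 (2*i+1).toNat
        + Finsupp.single 1 ((if Even n then 2*j else 2*j+1).toNat)
        + Finsupp.single 2 ((2*(n:ℤ) - 2*i - 2*j - if Even n then 0 else 1).toNat))
      (Dx^[n] (X 0))
  else 0

namespace MvPolynomial

variable {σ R : Type*}

section CommSemiring

variable [CommSemiring R]

open scoped Classical in
noncomputable def coeffInt (e : σ →₀ ℤ) (p : MvPolynomial σ R) : R :=
  if 0 ≤ e then coeff (e.mapRange Int.toNat Int.toNat_zero) p else 0

theorem coeffInt_of_nonneg {e : σ →₀ ℤ} (he : 0 ≤ e) (p : MvPolynomial σ R) :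
    coeffInt e p = coeff (e.mapRange Int.toNat Int.toNat_zero) p := by
  rw [coeffInt, if_pos he]

theorem coeffInt_of_not_nonneg {e : σ →₀ ℤ} (he : ¬0 ≤ e) (p : MvPolynomial σ R) :
    coeffInt e p = 0 := by
  rw [coeffInt, if_neg he]

theorem coeffInt_add (e : σ →₀ ℤ) (p q : MvPolynomial σ R) :
    coeffInt e (p + q) = coeffInt e p + coeffInt e q := by
  unfold coeffInt
  split_ifs <;> simp

variable [DecidableEq σ]

theorem coeffInt_X_mul (e : σ →₀ ℤ) (k : σ) (p : MvPolynomial σ R) :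
    coeffInt e (X k * p) = coeffInt (e - Finsupp.single k 1) p := by
  by_cases he : 0 ≤ e
  · have he' (l : σ) : 0 ≤ e l := he l
    rw [coeffInt_of_nonneg he, coeff_X_mul']
    rcases (he' k).eq_or_lt with hk | hk
    · rw [if_neg (by simp [← hk]), coeffInt_of_not_nonneg fun h => by simpa [← hk] using h k]
    · have hsub : 0 ≤ e - Finsupp.single k 1 := fun l => by
        rcases eq_or_ne l k with rfl | hl
        · simp; omega
        · simpa [hl] using he' l
      rw [if_pos (by simpa using hk), coeffInt_of_nonneg hsub]
      congr 1
      ext l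
      rcases eq_or_ne l k with rfl | hl <;> simp [*]
  · rw [coeffInt_of_not_nonneg he, coeffInt_of_not_nonneg]
    exact fun h => he (h.trans (by simp))

theorem derivation_apply_eq_sum_pderiv [Fintype σ]
    (D : Derivation R (MvPolynomial σ R) (MvPolynomial σ R)) (p : MvPolynomial σ R) :
    D p = ∑ i, D (X i) * pderiv i p := by
  have hsum (q : MvPolynomial σ R) :
      (∑ i, D (X i) • pderiv i) q = ∑ i, D (X i) * pderiv i q := by
    rw [← Derivation.coeFnAddMonoidHom_apply, map_sum, Finset.sum_apply]
    rfl
  have h : D = ∑ i, D (X i) • pderiv i := derivation_ext fun j => by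
    simp [hsum, pderiv_X, Pi.single_apply]
  rw [← hsum, ← h]

end CommSemiring

theorem coeffInt_pderiv [CommRing R] [DecidableEq σ] (e : σ →₀ ℤ) (k : σ)
    (p : MvPolynomial σ R) :
    coeffInt e (pderiv k p) = coeffInt (e + Finsupp.single k 1) p * (e k + 1 : ℤ) := by
  by_cases he : 0 ≤ e
  · have he' (l : σ) : 0 ≤ e l := he l
    rw [coeffInt_of_nonneg he, coeffInt_of_nonneg (add_nonneg he (by simp)), coeff_pderiv]
    congr 1
    · congr 1
      ext l
      rcases eq_or_ne l k with rfl | hl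
      · simp [Int.toNat_add (he' l)]
      · simp [hl.symm]
    · rw [Finsupp.mapRange_apply, ← Int.cast_natCast, Int.toNat_of_nonneg (he' k)]
      push_cast
      rfl
  · rw [coeffInt_of_not_nonneg he]
    by_cases hadd : 0 ≤ e + Finsupp.single k 1
    · suffices hk : e k = -1 by simp [hk]
      have hk1 : 0 ≤ e k + 1 := by simpa using hadd k
      refine le_antisymm (not_lt.1 fun hk => he fun l => ?_) (by linarith)
      rcases eq_or_ne l k with rfl | hl
      · simp; omega
      · simpa [hl] using hadd l
    · rw [coeffInt_of_not_nonneg hadd, zero_mul]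

end MvPolynomial

noncomputable def xyzExp (a b c : ℤ) : Fin 3 →₀ ℤ :=
  Finsupp.single 0 a + Finsupp.single 1 b + Finsupp.single 2 c

theorem Dx_apply (p : MvPolynomial (Fin 3) ℚ) :
    Dx p = X 1 * (X 2 * p) + X 0 * (X 1 * (X 2 * pderiv 0 p))
      + X 0 * (X 0 * (X 2 * pderiv 1 p)) + X 0 * (X 0 * (X 1 * pderiv 2 p)) := by
  rw [Dx, Derivation.leibniz, smul_eq_mul, smul_eq_mul, derivation_apply_eq_sum_pderiv,
    Fin.sum_univ_three]
  simp only [Dum, mkDerivation_X, Matrix.cons_val_zero, Matrix.cons_val_one, Matrix.cons_val_two,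
    Matrix.tail_cons, Matrix.head_cons]
  ring

theorem coeffInt_Dx (p : MvPolynomial (Fin 3) ℚ) (a b c : ℤ) :
    coeffInt (xyzExp a b c) (Dx p) =
      (a + 1) * coeffInt (xyzExp a (b - 1) (c - 1)) p
        + (b + 1) * coeffInt (xyzExp (a - 2) (b + 1) (c - 1)) p
        + (c + 1) * coeffInt (xyzExp (a - 2) (b - 1) (c + 1)) p := by
  simp only [Dx_apply, coeffInt_add, coeffInt_X_mul, coeffInt_pderiv]
  have hyz : xyzExp a b c - .single 1 1 - .single 2 1 = xyzExp a (b - 1) (c - 1) := by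
    ext k; fin_cases k <;> simp [xyzExp]
  have hx : xyzExp a b c - .single 0 1 - .single 1 1 - .single 2 1 + .single 0 1 =
      xyzExp a (b - 1) (c - 1) := by
    ext k; fin_cases k <;> simp [xyzExp]
  have hy : xyzExp a b c - .single 0 1 - .single 0 1 - .single 2 1 + .single 1 1 =
      xyzExp (a - 2) (b + 1) (c - 1) := by
    ext k; fin_cases k <;> simp [xyzExp]; ring
  have hz : xyzExp a b c - .single 0 1 - .single 0 1 - .single 1 1 + .single 2 1 =
      xyzExp (a - 2) (b - 1) (c + 1) := by
    ext k; fin_cases k <;> simp [xyzExp]; ring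
  rw [hyz, hx, hy, hz]
  simp only [xyzExp, Finsupp.coe_add, Finsupp.coe_sub, Pi.add_apply, Pi.sub_apply,
    Finsupp.single_apply]
  push_cast
  ring

theorem xyzExp_nonneg_iff {a b c : ℤ} :
    0 ≤ xyzExp a b c ↔ 0 ≤ a ∧ 0 ≤ b ∧ 0 ≤ c := by
  refine ⟨fun h => ⟨by simpa [xyzExp] using h 0, by simpa [xyzExp] using h 1,
    by simpa [xyzExp] using h 2⟩, fun ⟨ha, hb, hc⟩ k => ?_⟩
  fin_cases k <;> simpa [xyzExp]

theorem isHomogeneous_Dx {p : MvPolynomial (Fin 3) ℚ} {d : ℕ} (hp : p.IsHomogeneous (d + 1)) :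
    (Dx p).IsHomogeneous (d + 3) := by
  have hX (k : Fin 3) : (X k : MvPolynomial (Fin 3) ℚ).IsHomogeneous 1 := isHomogeneous_X ℚ k
  have hd (k : Fin 3) : (pderiv k p).IsHomogeneous d := hp.pderiv
  rw [Dx_apply]
  refine ((IsHomogeneous.add ?_ ?_).add ?_).add ?_
  · convert (hX 1).mul ((hX 2).mul hp) using 1; omega
  · convert (hX 0).mul ((hX 1).mul ((hX 2).mul (hd 0))) using 1; omega
  · convert (hX 0).mul ((hX 0).mul ((hX 2).mul (hd 1))) using 1; omega
  · convert (hX 0).mul ((hX 0).mul ((hX 1).mul (hd 2))) using 1; omega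

theorem isHomogeneous_iterate_Dx (n : ℕ) : (Dx^[n] (X 0)).IsHomogeneous (2 * n + 1) := by
  induction n with
  | zero => exact isHomogeneous_X ℚ 0
  | succ n ih => rw [Function.iterate_succ_apply']; exact isHomogeneous_Dx ih

theorem coeff_iterate_Dx_eq_coeffInt (n : ℕ) {a b c : ℤ} (ha : 0 ≤ a) (hb : 0 ≤ b)
    (habc : a + b + c = 2 * n + 1) :
    coeff (Finsupp.single 0 a.toNat + Finsupp.single 1 b.toNat + Finsupp.single 2 c.toNat)
      (Dx^[n] (X 0)) = coeffInt (xyzExp a b c) (Dx^[n] (X 0)) := by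
  by_cases hc : 0 ≤ c
  · rw [coeffInt_of_nonneg (xyzExp_nonneg_iff.2 ⟨ha, hb, hc⟩)]
    congr 1
    ext k; fin_cases k <;> simp [xyzExp]
  · -- `c.toNat` truncates `c` to `0`, but the monomial then has the wrong degree.
    rw [coeffInt_of_not_nonneg (fun h => hc (xyzExp_nonneg_iff.1 h).2.2)]
    refine (isHomogeneous_iterate_Dx n).coeff_eq_zero ?_
    simp only [map_add, Finsupp.degree_single]
    omega

theorem cC_eq_coeffInt (n : ℕ) (i j : ℤ) :
    cC n i j = coeffInt (xyzExp (2 * i + 1) (if Even n then 2 * j else 2 * j + 1)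
      (2 * n - 2 * i - 2 * j - if Even n then 0 else 1)) (Dx^[n] (X 0)) := by
  rw [cC]
  by_cases hij : 0 ≤ i ∧ 0 ≤ j
  · rw [if_pos hij]
    exact coeff_iterate_Dx_eq_coeffInt n (by omega) (by split_ifs <;> omega)
      (by split_ifs <;> ring)
  · rw [if_neg hij, coeffInt_of_not_nonneg fun h => hij ?_]
    obtain ⟨ha, hb, -⟩ := xyzExp_nonneg_iff.1 h
    constructor <;> split_ifs at hb <;> omega

theorem stmt4_general (n : ℕ) (hn : 1 ≤ n) (i j : ℤ) :
    cC (2*n) i j =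
      (2*(i:ℚ)+2) * cC (2*n-1) i (j-1) + (2*(j:ℚ)+1) * cC (2*n-1) (i-1) j
        + (4*(n:ℚ)-2*(i:ℚ)-2*(j:ℚ)+1) * cC (2*n-1) (i-1) (j-1) ∧
    cC (2*n+1) i j =
      (2*(i:ℚ)+2) * cC (2*n) i j + (2*(j:ℚ)+2) * cC (2*n) (i-1) (j+1)
        + (4*(n:ℚ)-2*(i:ℚ)-2*(j:ℚ)+2) * cC (2*n) (i-1) j := by
  obtain ⟨m, rfl⟩ : ∃ m, n = m + 1 := ⟨n - 1, by omega⟩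
  rw [show 2 * (m + 1) - 1 = 2 * m + 1 by omega]
  simp only [cC_eq_coeffInt, even_two_mul, Nat.not_even_two_mul_add_one, if_true, if_false]
  rw [show 2 * (m + 1) = 2 * m + 1 + 1 by ring]
  constructor <;> rw [Function.iterate_succ_apply', coeffInt_Dx] <;> push_cast <;> ring_nf

theorem stmt4 (n : ℕ) (hn : 1 ≤ n) (i j : ℤ) (hi : 0 ≤ i) (hj : 0 ≤ j) :
    cC (2*n) i j =
      (2*(i:ℚ)+2) * cC (2*n-1) i (j-1) + (2*(j:ℚ)+1) * cC (2*n-1) (i-1) j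
        + (4*(n:ℚ)-2*(i:ℚ)-2*(j:ℚ)+1) * cC (2*n-1) (i-1) (j-1) ∧
    cC (2*n+1) i j =
      (2*(i:ℚ)+2) * cC (2*n) i j + (2*(j:ℚ)+2) * cC (2*n) (i-1) (j+1)
        + (4*(n:ℚ)-2*(i:ℚ)-2*(j:ℚ)+2) * cC (2*n) (i-1) j :=
  stmt4_general n hn i j
end

section
/- Under the context-free grammar G = {w → wx, x → wx} with associated derivation D, for all n ≥ 1, D^n(w) = Σ_{k=0}^{n-1} A(n,k) w^{k+1} x^{n-k}, where A(n,k) is the Eulerian number. -/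
open MvPolynomial Finset

/-- The derivation for the grammar `G = {w → wx, x → wx}` on `ℚ[w,x]`
(`w = X 0`, `x = X 1`): `D w = w*x`, `D x = w*x`. -/
noncomputable def Dg : Derivation ℚ (MvPolynomial (Fin 2) ℚ) (MvPolynomial (Fin 2) ℚ) :=
  MvPolynomial.mkDerivation ℚ ![X 0 * X 1, X 0 * X 1]

/-- The number of descents of a permutation of `{0,…,n-1}` (positions `i` with `π i > π (i+1)`). -/
noncomputable def descents {n : ℕ} (π : Equiv.Perm (Fin n)) : ℕ :=
  Nat.card {i : Fin n // ∃ h : (i:ℕ)+1 < n, π ⟨(i:ℕ)+1, h⟩ < π i}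

/-- The Eulerian number `A(n,k)`: the number of permutations of `[n]` with exactly `k` descents. -/
noncomputable def eulerian (n k : ℕ) : ℕ :=
  Nat.card {π : Equiv.Perm (Fin n) // descents π = k}

/-- descent indicator at position `i` (as a natural number). -/
def dInd {m : ℕ} (π : Equiv.Perm (Fin m)) (i : ℕ) : ℕ :=
  if h : i + 1 < m then (if π ⟨i+1, h⟩ < π ⟨i, Nat.lt_of_succ_lt h⟩ then 1 else 0) else 0

lemma dInd_le_one {m : ℕ} (π : Equiv.Perm (Fin m)) (i : ℕ) : dInd π i ≤ 1 := by
  unfold dInd; split <;> [split <;> simp; simp]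

lemma dInd_of_ge {m : ℕ} (π : Equiv.Perm (Fin m)) {i : ℕ} (h : m ≤ i + 1) : dInd π i = 0 := by
  unfold dInd; rw [dif_neg (by omega)]

lemma descents_eq {m : ℕ} (π : Equiv.Perm (Fin m)) :
    descents π = ∑ i ∈ range m, dInd π i := by
  classical
  rw [descents, Nat.card_eq_fintype_card, Fintype.card_subtype, Finset.card_filter,
    ← Fin.sum_univ_eq_sum_range (fun i => dInd π i) m]
  refine Finset.sum_congr rfl fun i _ => ?_
  unfold dInd
  by_cases h : (i:ℕ) + 1 < m
  · rw [dif_pos h]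
    by_cases h2 : π ⟨(i:ℕ)+1, h⟩ < π ⟨(i:ℕ), Nat.lt_of_succ_lt h⟩
    · rw [if_pos h2, if_pos]
      exact ⟨h, by simpa using h2⟩
    · rw [if_neg h2, if_neg]
      rintro ⟨h', hlt⟩
      exact h2 (by simpa using hlt)
  · rw [dif_neg h, if_neg]
    rintro ⟨h', _⟩; exact h h'

variable {n : ℕ}

/-- Insert the maximum value at position `p`. -/
def ins (σ : Equiv.Perm (Fin n)) (p : Fin (n+1)) : Equiv.Perm (Fin (n+1)) :=
  (finSuccEquiv' p).trans ((Equiv.optionCongr σ).trans (finSuccEquiv' (Fin.last n)).symm)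

lemma ins_self (σ : Equiv.Perm (Fin n)) (p : Fin (n+1)) : ins σ p p = Fin.last n := by
  simp [ins, finSuccEquiv'_at, finSuccEquiv'_symm_none]

lemma ins_succAbove (σ : Equiv.Perm (Fin n)) (p : Fin (n+1)) (j : Fin n) :
    ins σ p (p.succAbove j) = (σ j).castSucc := by
  simp [ins, finSuccEquiv'_succAbove, finSuccEquiv'_symm_some, Fin.succAbove_last]

lemma ins_lt (σ : Equiv.Perm (Fin n)) (p : Fin (n+1)) {m : ℕ} (hm : m < (p:ℕ)) :
    ins σ p ⟨m, by omega⟩ = (σ ⟨m, by have := p.isLt; omega⟩).castSucc := by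
  have hmn : m < n := by have := p.isLt; omega
  have : (⟨m, by omega⟩ : Fin (n+1)) = p.succAbove ⟨m, hmn⟩ := by
    rw [Fin.succAbove_of_castSucc_lt]
    · rfl
    · exact (by simpa [Fin.lt_def] using hm)
  rw [this, ins_succAbove]

lemma ins_gt (σ : Equiv.Perm (Fin n)) (p : Fin (n+1)) {m : ℕ} (hp : (p:ℕ) < m) (hm : m < n + 1) :
    ins σ p ⟨m, hm⟩ = (σ ⟨m - 1, by omega⟩).castSucc := by
  have : (⟨m, hm⟩ : Fin (n+1)) = p.succAbove ⟨m - 1, by omega⟩ := by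
    rw [Fin.succAbove_of_le_castSucc]
    · simp [Fin.ext_iff]; omega
    · simp [Fin.le_def]; omega
  rw [this, ins_succAbove]

lemma ins_injective : Function.Injective (fun x : Equiv.Perm (Fin n) × Fin (n+1) => ins x.1 x.2) := by
  rintro ⟨σ, p⟩ ⟨σ', p'⟩ h
  simp only at h
  have hp : p = p' := by
    have h1 : ins σ' p' p = Fin.last n := by rw [← h, ins_self]
    have h2 : ins σ' p' p' = Fin.last n := ins_self σ' p'
    exact (ins σ' p').injective (h1.trans h2.symm)
  subst hp
  have hσ : σ = σ' := by
    ext j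
    have := congrArg (fun f : Equiv.Perm (Fin (n+1)) => f (p.succAbove j)) h
    simp only [ins_succAbove] at this
    exact congrArg Fin.val (Fin.castSucc_injective n this)
  simp [hσ]


lemma dInd_ins_lt (σ : Equiv.Perm (Fin n)) (p : Fin (n+1)) {i : ℕ} (h : i + 1 < (p:ℕ)) :
    dInd (ins σ p) i = dInd σ i := by
  have hp := p.isLt
  have h1 : i + 1 < n + 1 := by omega
  have h2 : i + 1 < n := by omega
  unfold dInd
  rw [dif_pos h1, dif_pos h2]
  have e1 : ins σ p ⟨i+1, h1⟩ = (σ ⟨i+1, h2⟩).castSucc := ins_lt σ p h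
  have e2 : ins σ p ⟨i, Nat.lt_of_succ_lt h1⟩ = (σ ⟨i, Nat.lt_of_succ_lt h2⟩).castSucc :=
    ins_lt σ p (by omega)
  rw [e1, e2]
  simp only [Fin.castSucc_lt_castSucc_iff]

lemma dInd_ins_eq_pred (σ : Equiv.Perm (Fin n)) (p : Fin (n+1)) {i : ℕ} (h : i + 1 = (p:ℕ)) :
    dInd (ins σ p) i = 0 := by
  have hp := p.isLt
  have h1 : i + 1 < n + 1 := by omega
  unfold dInd
  rw [dif_pos h1, if_neg]
  have e1 : (⟨i+1, h1⟩ : Fin (n+1)) = p := by simp [Fin.ext_iff]; omega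
  rw [e1, ins_self]
  exact Fin.not_lt.mpr (Fin.le_last _)

lemma dInd_ins_eq (σ : Equiv.Perm (Fin n)) (p : Fin (n+1)) {i : ℕ} (h : i = (p:ℕ)) (hi : i < n) :
    dInd (ins σ p) i = 1 := by
  have h1 : i + 1 < n + 1 := by omega
  unfold dInd
  rw [dif_pos h1, if_pos]
  have e2 : (⟨i, Nat.lt_of_succ_lt h1⟩ : Fin (n+1)) = p := by simp [Fin.ext_iff]; omega
  rw [e2, ins_self]
  have e1 : ins σ p ⟨i+1, h1⟩ = (σ ⟨i+1-1, by omega⟩).castSucc := ins_gt σ p (by omega) h1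
  rw [e1]
  exact Fin.castSucc_lt_last _

lemma dInd_ins_gt (σ : Equiv.Perm (Fin n)) (p : Fin (n+1)) {i : ℕ} (h : (p:ℕ) < i) (hi : i < n) :
    dInd (ins σ p) i = dInd σ (i-1) := by
  have h1 : i + 1 < n + 1 := by omega
  have h2 : (i-1) + 1 < n := by omega
  unfold dInd
  rw [dif_pos h1, dif_pos h2]
  have e1 : ins σ p ⟨i+1, h1⟩ = (σ ⟨i+1-1, by omega⟩).castSucc := ins_gt σ p (by omega) h1
  have e2 : ins σ p ⟨i, Nat.lt_of_succ_lt h1⟩ = (σ ⟨i-1, by omega⟩).castSucc :=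
    ins_gt σ p h (by omega)
  rw [e1, e2]
  simp only [Fin.castSucc_lt_castSucc_iff]
  have : (⟨i+1-1, by omega⟩ : Fin n) = ⟨(i-1)+1, h2⟩ := by simp [Fin.ext_iff]; omega
  rw [this]


/-- The key identity for descents under insertion. -/
lemma descents_ins (σ : Equiv.Perm (Fin n)) (p : Fin (n+1)) :
    descents (ins σ p) + (if 1 ≤ (p:ℕ) then dInd σ ((p:ℕ)-1) else 0)
      = descents σ + (if (p:ℕ) < n then 1 else 0) := by
  have hp : (p:ℕ) ≤ n := by have := p.isLt; omega
  have hS : descents (ins σ p) = ∑ i ∈ range n, dInd (ins σ p) i := by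
    rw [descents_eq, Finset.sum_range_succ, dInd_of_ge (ins σ p) (le_refl (n+1)), Nat.add_zero]
  have hdes : descents σ = ∑ i ∈ range n, dInd σ i := descents_eq σ
  rcases eq_or_lt_of_le hp with hPn | hPn
  · -- p = n : insertion at the end
    have hmain : ∑ i ∈ range n, dInd (ins σ p) i = ∑ i ∈ range n, dInd σ i := by
      refine Finset.sum_congr rfl fun i hi => ?_
      rw [Finset.mem_range] at hi
      rcases lt_or_eq_of_le (Nat.succ_le_of_lt hi) with h | h
      · exact dInd_ins_lt σ p (by omega)
      · rw [dInd_ins_eq_pred σ p (by omega), dInd_of_ge σ (by omega)]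
    have he : (if (p:ℕ) < n then 1 else 0) = 0 := if_neg (by omega)
    have hd : (if 1 ≤ (p:ℕ) then dInd σ ((p:ℕ)-1) else 0) = 0 := by
      split
      · exact dInd_of_ge σ (by omega)
      · rfl
    omega
  · -- p < n
    have he : (if (p:ℕ) < n then 1 else 0) = 1 := if_pos hPn
    have h0 : 0 < n := by omega
    have hsplit : ∑ i ∈ range (p:ℕ), dInd (ins σ p) i + ∑ i ∈ Ico (p:ℕ) n, dInd (ins σ p) i
        = ∑ i ∈ range n, dInd (ins σ p) i :=
      Finset.sum_range_add_sum_Ico _ (le_of_lt hPn)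
    have htail : ∑ i ∈ Ico (p:ℕ) n, dInd (ins σ p) i
        = 1 + ∑ i ∈ Ico (p:ℕ) (n-1), dInd σ i := by
      rw [Finset.sum_eq_sum_Ico_succ_bot hPn, dInd_ins_eq σ p rfl hPn]
      congr 1
      rw [Finset.sum_Ico_eq_sum_range, Finset.sum_Ico_eq_sum_range]
      have hlen : n - ((p:ℕ)+1) = n - 1 - (p:ℕ) := by omega
      rw [hlen]
      refine Finset.sum_congr rfl fun j hj => ?_
      rw [Finset.mem_range] at hj
      rw [dInd_ins_gt σ p (by omega) (by omega)]
      congr 1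
      omega
    have hdes' : descents σ = ∑ i ∈ range (n-1), dInd σ i := by
      have h1 : ∑ i ∈ range (n-1), dInd σ i + ∑ i ∈ Ico (n-1) n, dInd σ i
          = ∑ i ∈ range n, dInd σ i := Finset.sum_range_add_sum_Ico _ (by omega)
      have h2 : ∑ i ∈ Ico (n-1) n, dInd σ i = 0 := by
        rw [Finset.sum_eq_sum_Ico_succ_bot (show n-1 < n by omega), dInd_of_ge σ (by omega),
          show n-1+1 = n by omega, Finset.Ico_self, Finset.sum_empty]
        omega
      omega
    rcases Nat.eq_zero_or_pos (p:ℕ) with hP0 | hP0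
    · -- p = 0
      have hd : (if 1 ≤ (p:ℕ) then dInd σ ((p:ℕ)-1) else 0) = 0 := if_neg (by omega)
      have hhead : ∑ i ∈ range (p:ℕ), dInd (ins σ p) i = 0 := by
        rw [hP0]; simp
      have hIco : ∑ i ∈ Ico (p:ℕ) (n-1), dInd σ i = ∑ i ∈ range (n-1), dInd σ i := by
        rw [hP0, ← Nat.Ico_zero_eq_range]
      omega
    · -- 0 < p < n
      have hd : (if 1 ≤ (p:ℕ) then dInd σ ((p:ℕ)-1) else 0) = dInd σ ((p:ℕ)-1) :=
        if_pos hP0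
      have hhead : ∑ i ∈ range (p:ℕ), dInd (ins σ p) i
          = ∑ i ∈ range ((p:ℕ)-1), dInd σ i := by
        rw [show (p:ℕ) = ((p:ℕ)-1)+1 by omega, Finset.sum_range_succ,
          dInd_ins_eq_pred σ p (by omega), Nat.add_zero]
        refine Finset.sum_congr rfl fun i hi => ?_
        rw [Finset.mem_range] at hi
        exact dInd_ins_lt σ p (by omega)
      have hdessplit : ∑ i ∈ range ((p:ℕ)-1), dInd σ i + ∑ i ∈ Ico ((p:ℕ)-1) (n-1), dInd σ i
          = ∑ i ∈ range (n-1), dInd σ i := Finset.sum_range_add_sum_Ico _ (by omega)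
      have hmid : ∑ i ∈ Ico ((p:ℕ)-1) (n-1), dInd σ i
          = dInd σ ((p:ℕ)-1) + ∑ i ∈ Ico (p:ℕ) (n-1), dInd σ i := by
        rw [Finset.sum_eq_sum_Ico_succ_bot (show (p:ℕ)-1 < n-1 by omega),
          show (p:ℕ)-1+1 = (p:ℕ) by omega]
      omega

lemma eulerian_def (n k : ℕ) : eulerian n k = Nat.card {π : Equiv.Perm (Fin n) // descents π = k} := rfl

lemma eulerian_eq_card (m k : ℕ) [DecidablePred fun π : Equiv.Perm (Fin m) => descents π = k] :
    eulerian m k = (Finset.univ.filter (fun π : Equiv.Perm (Fin m) => descents π = k)).card := by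
  rw [eulerian_def, Nat.card_eq_fintype_card, Fintype.card_subtype]

lemma descents_lt {m : ℕ} (hm : 1 ≤ m) (σ : Equiv.Perm (Fin m)) : descents σ < m := by
  have h1 : ∑ i ∈ range (m-1), dInd σ i + ∑ i ∈ Ico (m-1) m, dInd σ i
      = ∑ i ∈ range m, dInd σ i := Finset.sum_range_add_sum_Ico _ (by omega)
  have h2 : ∑ i ∈ Ico (m-1) m, dInd σ i = 0 := by
    rw [Finset.sum_eq_sum_Ico_succ_bot (show m-1 < m by omega), dInd_of_ge σ (by omega),
      show m-1+1 = m by omega, Finset.Ico_self, Finset.sum_empty]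
    omega
  have h3 : ∑ i ∈ range (m-1), dInd σ i ≤ (m-1) * 1 := by
    calc ∑ i ∈ range (m-1), dInd σ i ≤ ∑ _i ∈ range (m-1), 1 :=
        Finset.sum_le_sum fun i _ => dInd_le_one σ i
      _ = (m-1) * 1 := by rw [Finset.sum_const, Finset.card_range, smul_eq_mul]
  have h4 := descents_eq σ
  omega

lemma eulerian_of_le {m k : ℕ} (hm : 1 ≤ m) (h : m ≤ k) : eulerian m k = 0 := by
  classical
  rw [eulerian_eq_card, Finset.card_eq_zero, Finset.filter_eq_empty_iff]
  intro σ _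
  have := descents_lt hm σ
  omega

lemma eulerian_one_zero : eulerian 1 0 = 1 := by
  classical
  rw [eulerian_eq_card]
  have : ∀ π : Equiv.Perm (Fin 1), descents π = 0 := fun π => by
    rw [descents_eq, Finset.sum_range_one, dInd_of_ge π (by omega)]
  simp [this]

lemma eulerian_succ (n k : ℕ) :
    eulerian (n+1) k = (k+1) * eulerian n k
      + (if k = 0 then 0 else (n+1-k) * eulerian n (k-1)) := by
  classical
  -- fiber count for a fixed σ
  have fib : ∀ σ : Equiv.Perm (Fin n),
      (Finset.univ.filter (fun p : Fin (n+1) => descents (ins σ p) = k)).card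
        = (if descents σ = k then k+1 else 0)
          + (if descents σ + 1 = k then n + 1 - k else 0) := by
    intro σ
    set j := descents σ with hj
    have hA : ∀ p : Fin (n+1), descents (ins σ p) = j ∨ descents (ins σ p) = j + 1 := by
      intro p
      have hkey := descents_ins σ p
      by_cases h1 : 1 ≤ (p:ℕ)
      · rw [if_pos h1] at hkey
        by_cases h2 : (p:ℕ) < n
        · rw [if_pos h2] at hkey
          have := dInd_le_one σ ((p:ℕ)-1)
          omega
        · rw [if_neg h2] at hkey
          have : dInd σ ((p:ℕ)-1) = 0 := dInd_of_ge σ (by omega)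
          omega
      · rw [if_neg h1] at hkey
        by_cases h2 : (p:ℕ) < n
        · rw [if_pos h2] at hkey; omega
        · rw [if_neg h2] at hkey; omega
    have hsum_d : ∑ p : Fin (n+1), (if 1 ≤ (p:ℕ) then dInd σ ((p:ℕ)-1) else 0) = j := by
      rw [Fin.sum_univ_eq_sum_range (fun m => if 1 ≤ m then dInd σ (m-1) else 0) (n+1),
        Finset.sum_range_succ']
      simp only [if_neg (by omega : ¬ (1:ℕ) ≤ 0), Nat.add_zero]
      rw [hj, descents_eq]
      refine Finset.sum_congr rfl fun i _ => ?_
      rw [if_pos (by omega), Nat.add_sub_cancel]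
    have hsum_e : ∑ p : Fin (n+1), (if (p:ℕ) < n then 1 else 0) = n := by
      rw [Fin.sum_univ_eq_sum_range (fun m => if m < n then 1 else 0) (n+1),
        Finset.sum_range_succ, if_neg (by omega), Nat.add_zero]
      rw [Finset.sum_congr rfl fun i hi => if_pos (Finset.mem_range.mp hi)]
      simp
    have hsum_key : ∑ p : Fin (n+1), descents (ins σ p) + j = (n+1) * j + n := by
      have : ∑ p : Fin (n+1), (descents (ins σ p)
            + (if 1 ≤ (p:ℕ) then dInd σ ((p:ℕ)-1) else 0))
          = ∑ p : Fin (n+1), (j + (if (p:ℕ) < n then 1 else 0)) :=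
        Finset.sum_congr rfl fun p _ => descents_ins σ p
      rw [Finset.sum_add_distrib, Finset.sum_add_distrib, hsum_d, hsum_e,
        Finset.sum_const, Finset.card_univ, Fintype.card_fin, smul_eq_mul] at this
      omega
    set t := (Finset.univ.filter (fun p : Fin (n+1) => descents (ins σ p) = j + 1)).card with htdef
    have ht : ∑ p : Fin (n+1), descents (ins σ p) = (n+1) * j + t := by
      have : ∑ p : Fin (n+1), descents (ins σ p)
          = ∑ p : Fin (n+1), (j + if descents (ins σ p) = j + 1 then 1 else 0) := by
        refine Finset.sum_congr rfl fun p _ => ?_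
        rcases hA p with h | h <;> rw [h] <;> simp
      rw [this, Finset.sum_add_distrib, Finset.sum_const, Finset.card_univ, Fintype.card_fin,
        smul_eq_mul, ← Finset.card_filter]
    have htj : t + j = n := by omega
    set s := (Finset.univ.filter (fun p : Fin (n+1) => descents (ins σ p) = j)).card with hsdef
    have hst : s + t = n + 1 := by
      have hone : ∀ p : Fin (n+1),
          (if descents (ins σ p) = j then 1 else 0)
            + (if descents (ins σ p) = j + 1 then 1 else 0) = 1 := by
        intro p
        rcases hA p with h | h <;> rw [h] <;> split_ifs <;> omega
      have : ∑ p : Fin (n+1), ((if descents (ins σ p) = j then 1 else 0)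
            + (if descents (ins σ p) = j + 1 then 1 else 0)) = n + 1 := by
        rw [Finset.sum_congr rfl fun p _ => hone p, Finset.sum_const, Finset.card_univ,
          Fintype.card_fin, smul_eq_mul, mul_one]
      rw [Finset.sum_add_distrib, ← Finset.card_filter, ← Finset.card_filter] at this
      omega
    by_cases hk1 : j = k
    · subst hk1
      rw [if_pos rfl, if_neg (by omega)]
      have : (Finset.univ.filter (fun p : Fin (n+1) => descents (ins σ p) = j)).card = j + 1 := by
        omega
      omega
    · rw [if_neg hk1]
      by_cases hk2 : j + 1 = k
      · rw [if_pos hk2]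
        have : (Finset.univ.filter (fun p : Fin (n+1) => descents (ins σ p) = k)).card = t := by
          rw [htdef]; congr 1; exact Finset.filter_congr fun p _ => by rw [hk2]
        omega
      · rw [if_neg hk2]
        rw [Finset.card_eq_zero, Finset.filter_eq_empty_iff]
        intro p _
        rcases hA p with h | h <;> omega
  -- the bijection
  have hbij : Function.Bijective
      (fun x : Equiv.Perm (Fin n) × Fin (n+1) => ins x.1 x.2) := by
    rw [Fintype.bijective_iff_injective_and_card]
    refine ⟨ins_injective, ?_⟩
    rw [Fintype.card_prod, Fintype.card_perm, Fintype.card_perm, Fintype.card_fin,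
      Fintype.card_fin, Nat.factorial_succ, mul_comm]
  have step1 : eulerian (n+1) k
      = ∑ x : Equiv.Perm (Fin n) × Fin (n+1),
          (if descents (ins x.1 x.2) = k then 1 else 0) := by
    rw [eulerian_eq_card, Finset.card_filter]
    exact (Fintype.sum_bijective _ hbij _ _ (fun x => rfl)).symm
  rw [step1, Fintype.sum_prod_type]
  have step2 : ∀ σ : Equiv.Perm (Fin n),
      ∑ p : Fin (n+1), (if descents (ins σ p) = k then 1 else 0)
        = (if descents σ = k then k+1 else 0)
          + (if descents σ + 1 = k then n + 1 - k else 0) := by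
    intro σ
    rw [← Finset.card_filter]
    exact fib σ
  rw [Finset.sum_congr rfl fun σ _ => step2 σ, Finset.sum_add_distrib]
  congr 1
  · rw [← Finset.sum_filter, Finset.sum_const, smul_eq_mul, ← eulerian_eq_card, mul_comm]
  · by_cases hk : k = 0
    · subst hk
      rw [if_pos rfl, Finset.sum_eq_zero fun σ _ => if_neg (by omega)]
    · rw [if_neg hk]
      have : Finset.univ.filter (fun σ : Equiv.Perm (Fin n) => descents σ + 1 = k)
          = Finset.univ.filter (fun σ : Equiv.Perm (Fin n) => descents σ = k - 1) := by
        exact Finset.filter_congr fun σ _ => by constructor <;> (intro h; omega)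
      rw [← Finset.sum_filter, Finset.sum_const, smul_eq_mul, this, ← eulerian_eq_card, mul_comm]

lemma Dg_X0 : Dg (X 0) = X 0 * X 1 := by
  simp [Dg, MvPolynomial.mkDerivation_X]

lemma Dg_X1 : Dg (X 1) = X 0 * X 1 := by
  simp [Dg, MvPolynomial.mkDerivation_X]

lemma Dg_mono (a b : ℕ) :
    Dg (X 0 ^ (a+1) * X 1 ^ (b+1)) =
      ((a+1 : ℕ) : ℚ) • (X 0 ^ (a+1) * X 1 ^ (b+2))
        + ((b+1 : ℕ) : ℚ) • (X 0 ^ (a+2) * X 1 ^ (b+1)) := by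
  rw [Derivation.leibniz, Derivation.leibniz_pow, Derivation.leibniz_pow, Dg_X0, Dg_X1]
  simp only [Nat.cast_smul_eq_nsmul, smul_eq_mul, nsmul_eq_mul, Nat.add_sub_cancel]
  push_cast
  ring

theorem stmt8 (n : ℕ) (hn : 1 ≤ n) :
    (fun p => Dg p)^[n] (X 0) =
      ∑ k ∈ Finset.range n, (eulerian n k : ℚ) • (X 0 ^ (k+1) * X 1 ^ (n-k)) := by
  induction n, hn using Nat.le_induction with
  | base =>
    rw [Function.iterate_one, Finset.sum_range_one, Dg_X0, eulerian_one_zero]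
    norm_num
  | succ n hn ih =>
    rw [Function.iterate_succ_apply', ih, map_sum]
    have hterm : ∀ k ∈ Finset.range n,
        Dg ((eulerian n k : ℚ) • (X 0 ^ (k+1) * X 1 ^ (n-k)))
          = ((((k+1) * eulerian n k : ℕ)) : ℚ) • (X 0 ^ (k+1) * X 1 ^ (n+1-k))
            + ((((n-k) * eulerian n k : ℕ)) : ℚ) • (X 0 ^ (k+2) * X 1 ^ (n-k)) := by
      intro k hk
      rw [Finset.mem_range] at hk
      obtain ⟨c, hc⟩ : ∃ c, n - k = c + 1 := ⟨n - k - 1, by omega⟩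
      rw [Derivation.map_smul, hc, Dg_mono k c, smul_add, smul_smul, smul_smul]
      have h1 : c + 2 = n + 1 - k := by omega
      have h2 : k + 2 = k + 2 := rfl
      rw [h1]
      push_cast
      ring_nf
    rw [Finset.sum_congr rfl hterm, Finset.sum_add_distrib]
    -- now rewrite the RHS
    have hrec : ∀ k ∈ Finset.range (n+1),
        ((eulerian (n+1) k : ℚ)) • (X 0 ^ (k+1) * X 1 ^ (n+1-k) : MvPolynomial (Fin 2) ℚ)
          = ((((k+1) * eulerian n k : ℕ)) : ℚ) • (X 0 ^ (k+1) * X 1 ^ (n+1-k))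
            + (((if k = 0 then (0:ℕ) else (n+1-k) * eulerian n (k-1)) : ℕ) : ℚ)
                • (X 0 ^ (k+1) * X 1 ^ (n+1-k)) := by
      intro k _
      rw [← add_smul]
      congr 1
      rw [eulerian_succ n k]
      split_ifs <;> push_cast <;> ring
    rw [Finset.sum_congr rfl hrec, Finset.sum_add_distrib]
    congr 1
    · -- first sums
      rw [Finset.sum_range_succ, eulerian_of_le hn (le_refl n)]
      norm_num
    · -- second sums
      rw [Finset.sum_range_succ'
        (f := fun k => (((if k = 0 then (0:ℕ) else (n+1-k) * eulerian n (k-1)) : ℕ) : ℚ)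
          • (X 0 ^ (k+1) * X 1 ^ (n+1-k) : MvPolynomial (Fin 2) ℚ)) n]
      simp only [if_true, Nat.cast_zero, zero_smul, add_zero]
      refine Finset.sum_congr rfl fun k hk => ?_
      rw [Finset.mem_range] at hk
      rw [if_neg (by omega : ¬ k + 1 = 0)]
      have h1 : n + 1 - (k + 1) = n - k := by omega
      have h2 : k + 1 - 1 = k := by omega
      rw [h1, h2]
end
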